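/- arXiv:2501.05827 — 4 statements merged into one kernel-verified Lean document; each statement's English description precedes it below -/
import Mathlib

section
/- Let I_a ⊆ Q_n be the initial segment of length a and let S ⊆ Q_n with |S| = a. Then m(I_a) = m(S) (the m-vectors agree in every coordinate) if and only if S = I_a. -/
/-- The hypercube graph on `{0,1}^n`: two strings adjacent iff they differ in one coordinate. -/
def hypercube (n : ℕ) : SimpleGraph (Fin n → Bool) where
  Adj x y := (Finset.univ.filter (fun i => x i ≠ y i)).card = 1
  symm := by constructor; intro x y h; simpa [ne_comm] using h
  loopless := by constructor; intro x h; simp at h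

/-- The integer represented by a string, position 0 most significant. -/
def bval {n : ℕ} (x : Fin n → Bool) : ℕ :=
  ∑ i : Fin n, if x i then 2 ^ (n - 1 - i.val) else 0

/-- The initial segment of length `a` in the binary order on `{0,1}^n`. -/
def initSeg (n a : ℕ) : Finset (Fin n → Bool) :=
  Finset.univ.filter (fun x => bval x < a)

/-- `m_j(S)`: number of elements of `S` with a `1` in coordinate `j`. -/
def mCount {n : ℕ} (S : Finset (Fin n → Bool)) (j : Fin n) : ℕ :=
  (S.filter (fun x => x j = true)).card

/-- The hyperface `F_{j,k}` of strings whose `j`-th coordinate equals `k`. -/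
def face (n : ℕ) (j : Fin n) (k : Bool) : Finset (Fin n → Bool) :=
  Finset.univ.filter (fun x => x j = k)

/-! The weights `2 ^ (n - 1 - j)` turn the vector `m(S)` into `∑ x ∈ S, bval x`. Since `bval` is a
bijection from `Q_n` onto `[0, 2 ^ n)`, equal `m`-vectors give an `a`-element set of naturals,
`bval '' S`, with the same sum as `{0, …, a - 1}`; among `a`-element sets of naturals that sum is
minimal and attained only by `{0, …, a - 1}` itself. -/

open Finset

theorem Finset.eq_range_card_of_sum_le_sum_range {s : Finset ℕ}
    (hs : ∑ x ∈ s, x ≤ ∑ x ∈ range #s, x) : s = range #s := by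
  set r := range #s
  have hcard : #s = #r := by simp [r]
  by_contra hne
  have hsr : (s \ r).Nonempty := by
    rw [nonempty_iff_ne_empty, Ne, sdiff_eq_empty_iff_subset]
    exact fun hsub => hne (eq_of_subset_of_card_le hsub hcard.ge)
  have hrs : (r \ s).Nonempty := by
    rw [← card_pos, ← card_sdiff_comm hcard]; exact hsr.card_pos
  have hlt : ∑ x ∈ r, x < ∑ x ∈ s, x := calc
    ∑ x ∈ r, x = ∑ x ∈ r ∩ s, x + ∑ x ∈ r \ s, x := (sum_inter_add_sum_sdiff r s _).symm
    _ < ∑ x ∈ r ∩ s, x + ∑ _x ∈ r \ s, #s := by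
      gcongr with x hx
      simpa [r] using (mem_sdiff.1 hx).1
    _ = ∑ x ∈ s ∩ r, x + ∑ _x ∈ s \ r, #s := by
      rw [inter_comm, sum_const, sum_const, card_sdiff_comm hcard]
    _ ≤ ∑ x ∈ s ∩ r, x + ∑ x ∈ s \ r, x := by
      gcongr with x hx
      simpa [r] using (mem_sdiff.1 hx).2
    _ = ∑ x ∈ s, x := sum_inter_add_sum_sdiff s r _
  omega

/-- Reversing the coordinates turns the most-significant-first reading of `bval` into the
least-significant-first digit expansion of `finFunctionFinEquiv`. -/
def bvalEquiv (n : ℕ) : (Fin n → Bool) ≃ Fin (2 ^ n) :=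
  (Equiv.arrowCongr Fin.revPerm finTwoEquiv.symm).trans finFunctionFinEquiv

theorem val_bvalEquiv {n : ℕ} (x : Fin n → Bool) : (bvalEquiv n x : ℕ) = bval x := by
  rw [bvalEquiv, Equiv.trans_apply, finFunctionFinEquiv_apply, bval]
  refine Fintype.sum_equiv Fin.revPerm _ _ fun i => ?_
  have hexp : n - 1 - (n - (i + 1)) = i := by omega
  simp only [Equiv.arrowCongr_apply, Function.comp_apply, Fin.revPerm_symm, Fin.revPerm_apply,
    Fin.val_rev, hexp]
  cases x i.rev <;> simp [finTwoEquiv]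

theorem bval_injective (n : ℕ) : Function.Injective (bval (n := n)) := fun x y h =>
  (bvalEquiv n).injective (Fin.ext (by rw [val_bvalEquiv, val_bvalEquiv, h]))

theorem map_initSeg {n a : ℕ} (ha : a ≤ 2 ^ n) :
    (initSeg n a).map ⟨bval, bval_injective n⟩ = range a := by
  ext b
  simp only [mem_map, initSeg, mem_filter, mem_univ, true_and, Function.Embedding.coeFn_mk,
    mem_range]
  refine ⟨fun ⟨x, hx, hxb⟩ => hxb ▸ hx, fun hb => ?_⟩
  refine ⟨(bvalEquiv n).symm ⟨b, hb.trans_le ha⟩, ?_⟩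
  rw [← val_bvalEquiv, Equiv.apply_symm_apply]
  exact ⟨hb, rfl⟩

theorem sum_bval_eq_sum_mCount {n : ℕ} (S : Finset (Fin n → Bool)) :
    ∑ x ∈ S, bval x = ∑ j : Fin n, 2 ^ (n - 1 - (j : ℕ)) * mCount S j := by
  simp only [bval, mCount, card_filter, mul_sum]
  rw [sum_comm]
  refine sum_congr rfl fun x _ => sum_congr rfl fun j _ => ?_
  split <;> simp

theorem stmt_4 (n a : ℕ) (ha : a ≤ 2 ^ n) (S : Finset (Fin n → Bool)) (hS : S.card = a) :
    (∀ j : Fin n, mCount (initSeg n a) j = mCount S j) ↔ S = initSeg n a := by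
  refine ⟨fun hm => ?_, fun h _ => h ▸ rfl⟩
  set e : (Fin n → Bool) ↪ ℕ := ⟨bval, bval_injective n⟩
  have hcard : #(S.map e) = a := by rw [card_map, hS]
  have hsum : ∑ b ∈ S.map e, b = ∑ b ∈ range #(S.map e), b := by
    rw [hcard, ← map_initSeg ha, sum_map, sum_map]
    simp only [e, Function.Embedding.coeFn_mk, sum_bval_eq_sum_mCount, hm]
  apply map_injective e
  rw [map_initSeg ha, ← hcard]
  exact eq_range_card_of_sum_le_sum_range hsum.le
end

section
/- Let I_a ⊆ Q_n with a ≥ 1, and let α be the smallest index with m_α(I_a) ≠ 0. Then m_α(I_a) = a − 2^{n−1−α}, and this is the smallest nonzero value among all entries m_j(I_a) and a − m_j(I_a) (j = 0,...,n−1) of the m-table of I_a. -/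
/-! Reading `x` as the binary number `bval x` identifies `initSeg n a` with `{0, …, a - 1}` and
`m_j(I_a)` with the number of `m < a` whose bit `p = n - 1 - j` is set. Minimality of `α` gives
`a ≤ 2^(k+1)` for `k = n - 1 - α`, and then exactly `a - 2^k` of the `m < a` have bit `k` set.
Flipping bit `p` (`m ↦ m ^^^ 2^p`) sends the `m < a` with bit `p` set injectively to those with it
clear, so every count is at most `a / 2 ≤ 2^k`; for `p ≤ k` it sends the `m < a` with bit `p` clear
to the `m < 2^(k+1)` with it set, so at most `2^k` of them have bit `p` clear. Bits `p > k` are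
never set below `a`, so every nonzero entry of the m-table is at least `a - 2^k`. -/

open Finset

theorem Nat.testBit_sum_two_pow (s : Finset ℕ) (p : ℕ) :
    (∑ i ∈ s, 2 ^ i).testBit p = true ↔ p ∈ s := by
  rw [← Nat.mem_bitIndices, ← List.mem_toFinset, toFinset_bitIndices_sum_two_pow]

theorem Finset.card_le_card_of_forall_xor_mem {s t : Finset ℕ} (c : ℕ)
    (h : ∀ m ∈ s, m ^^^ c ∈ t) : #s ≤ #t :=
  card_le_card_of_injOn (· ^^^ c) h (Nat.xor_left_injective.injOn)

def bitCount (p a : ℕ) : ℕ := #{m ∈ range a | m.testBit p}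

theorem bitCount_add_card_filter_not (p a : ℕ) :
    bitCount p a + #{m ∈ range a | ¬ m.testBit p} = a := by
  rw [bitCount, card_filter_add_card_filter_not, card_range]

theorem bitCount_eq_zero_iff {p a : ℕ} : bitCount p a = 0 ↔ a ≤ 2 ^ p := by
  rw [bitCount, card_eq_zero, filter_eq_empty_iff]
  constructor
  · intro h
    by_contra! hp
    exact h (mem_range.2 hp) Nat.testBit_two_pow_self
  · intro h m hm
    simp [Nat.testBit_lt_two_pow ((mem_range.1 hm).trans_le h)]

theorem two_mul_bitCount_le (p a : ℕ) : 2 * bitCount p a ≤ a := by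
  have hflip : bitCount p a ≤ #{m ∈ range a | ¬ m.testBit p} := by
    refine card_le_card_of_forall_xor_mem (2 ^ p) fun m hm => ?_
    simp only [mem_filter, mem_range] at hm ⊢
    have hbit : (m ^^^ 2 ^ p).testBit p = false := by simp [hm.2]
    refine ⟨lt_trans (Nat.lt_of_testBit p hbit hm.2 fun j hj => ?_) hm.1, by simp [hbit]⟩
    simp [Nat.testBit_two_pow_of_ne hj.ne]
  have := bitCount_add_card_filter_not p a
  omega

theorem card_filter_not_testBit_le {p k a : ℕ} (hp : p ≤ k) (ha : a ≤ 2 ^ (k + 1)) :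
    #{m ∈ range a | ¬ m.testBit p} ≤ bitCount p (2 ^ (k + 1)) := by
  refine card_le_card_of_forall_xor_mem (2 ^ p) fun m hm => ?_
  simp only [mem_filter, mem_range] at hm ⊢
  refine ⟨Nat.xor_lt_two_pow (hm.1.trans_le ha) (Nat.pow_lt_pow_right one_lt_two (by omega)), ?_⟩
  simpa using hm.2

theorem sub_bitCount_le {p k a : ℕ} (hp : p ≤ k) (ha : a ≤ 2 ^ (k + 1)) :
    a - bitCount p a ≤ 2 ^ k := by
  have h₁ := card_filter_not_testBit_le hp ha
  have h₂ := two_mul_bitCount_le p (2 ^ (k + 1))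
  have h₃ := bitCount_add_card_filter_not p a
  have h₄ : 2 ^ (k + 1) = 2 * 2 ^ k := pow_succ' 2 k
  omega

theorem bitCount_eq_sub {k a : ℕ} (ha : a ≤ 2 ^ (k + 1)) :
    bitCount k a = a - 2 ^ k := by
  rw [bitCount, ← Nat.card_Ico]
  congr 1
  ext m
  simp only [mem_filter, mem_range, mem_Ico]
  constructor
  · rintro ⟨hma, hm⟩
    exact ⟨Nat.ge_two_pow_of_testBit hm, hma⟩
  · rintro ⟨hkm, hma⟩
    refine ⟨hma, ?_⟩
    obtain ⟨r, rfl⟩ := Nat.exists_eq_add_of_le hkm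
    have hr : r < 2 ^ k := by rw [pow_succ] at ha; omega
    simp [Nat.testBit_two_pow_add_eq, Nat.testBit_lt_two_pow hr]

theorem bval_eq_sum_two_pow {n : ℕ} (x : Fin n → Bool) :
    bval x = ∑ p ∈ (univ.filter fun i => x i).image (fun i : Fin n => n - 1 - i.val), 2 ^ p := by
  rw [bval, ← sum_filter, sum_image]
  intro i _ j _ h
  exact Fin.ext (by simp at h; omega)

theorem testBit_bval {n : ℕ} (x : Fin n → Bool) (j : Fin n) :
    (bval x).testBit (n - 1 - j.val) = x j := by
  rw [Bool.eq_iff_iff, bval_eq_sum_two_pow, Nat.testBit_sum_two_pow]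
  simp only [mem_image, mem_filter, mem_univ, true_and]
  constructor
  · rintro ⟨i, hi, h⟩
    rwa [← Fin.ext (by omega : i.val = j.val)]
  · exact fun hj => ⟨j, hj, rfl⟩

theorem bval_lt_two_pow {n : ℕ} (x : Fin n → Bool) : bval x < 2 ^ n := by
  refine Nat.lt_pow_two_of_testBit _ fun p hp => ?_
  rw [bval_eq_sum_two_pow, Bool.eq_false_iff, ne_eq, Nat.testBit_sum_two_pow]
  simp only [mem_image]
  omega

theorem bval_testBit {n m : ℕ} (hm : m < 2 ^ n) :
    bval (fun i : Fin n => m.testBit (n - 1 - i.val)) = m := by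
  refine Nat.eq_of_testBit_eq fun p => ?_
  rcases lt_or_ge p n with hp | hp
  · have := testBit_bval (fun i : Fin n => m.testBit (n - 1 - i.val)) ⟨n - 1 - p, by omega⟩
    simpa [show n - 1 - (n - 1 - p) = p by omega] using this
  · rw [Nat.testBit_lt_two_pow ((bval_lt_two_pow _).trans_le (Nat.pow_le_pow_right two_pos hp)),
      Nat.testBit_lt_two_pow (hm.trans_le (Nat.pow_le_pow_right two_pos hp))]

theorem mCount_initSeg {n a : ℕ} (ha : a ≤ 2 ^ n) (j : Fin n) :
    mCount (initSeg n a) j = bitCount (n - 1 - j.val) a := by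
  refine card_nbij' bval (fun m i => m.testBit (n - 1 - i.val)) ?_ ?_ ?_ ?_
  · intro x hx
    simp_all [initSeg, testBit_bval]
  · intro m hm
    simp only [coe_filter, mem_range, Set.mem_ofPred_eq] at hm
    simp [initSeg, bval_testBit (hm.1.trans_le ha), hm]
  · intro x _
    simp [testBit_bval]
  · intro m hm
    simp only [coe_filter, mem_range, Set.mem_ofPred_eq] at hm
    exact bval_testBit (hm.1.trans_le ha)

theorem stmt_7_general (n a : ℕ) (ha2 : a ≤ 2 ^ n) (α : Fin n)
    (hmin : ∀ β : Fin n, β < α → mCount (initSeg n a) β = 0) :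
    mCount (initSeg n a) α = a - 2 ^ (n - 1 - α.val) ∧
    (∀ j : Fin n,
      (mCount (initSeg n a) j ≠ 0 → mCount (initSeg n a) α ≤ mCount (initSeg n a) j) ∧
      (a - mCount (initSeg n a) j ≠ 0 →
        mCount (initSeg n a) α ≤ a - mCount (initSeg n a) j)) := by
  simp only [mCount_initSeg ha2] at hmin ⊢
  set k := n - 1 - α.val with hk
  have hhi : a ≤ 2 ^ (k + 1) := by
    rcases Nat.eq_zero_or_pos α.val with h0 | h0
    · rwa [show k + 1 = n by omega]
    · have h := hmin ⟨α - 1, by omega⟩ (Fin.lt_def.2 (by simp; omega))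
      rwa [bitCount_eq_zero_iff, show n - 1 - (α.val - 1) = k + 1 by omega] at h
  have hcount := bitCount_eq_sub hhi
  refine ⟨hcount, fun j => ⟨fun hj => ?_, fun _ => ?_⟩⟩
  · have hp : n - 1 - j.val ≤ k := by
      by_contra! hp
      exact hj (bitCount_eq_zero_iff.2 (hhi.trans (Nat.pow_le_pow_right two_pos hp)))
    have := sub_bitCount_le hp hhi
    omega
  · have := two_mul_bitCount_le (n - 1 - j.val) a
    rw [pow_succ] at hhi
    omega

theorem stmt_7 (n a : ℕ) (ha : 1 ≤ a) (ha2 : a ≤ 2 ^ n) (α : Fin n)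
    (hα : mCount (initSeg n a) α ≠ 0)
    (hmin : ∀ β : Fin n, β < α → mCount (initSeg n a) β = 0) :
    mCount (initSeg n a) α = a - 2 ^ (n - 1 - α.val) ∧
    (∀ j : Fin n,
      (mCount (initSeg n a) j ≠ 0 → mCount (initSeg n a) α ≤ mCount (initSeg n a) j) ∧
      (a - mCount (initSeg n a) j ≠ 0 →
        mCount (initSeg n a) α ≤ a - mCount (initSeg n a) j)) :=
  stmt_7_general n a ha2 α hmin
end

section
/- For a ≤ 2^n and initial segments in Q_{n+1} (m-vector indexed 0..n): m_j(I_{2a}) = 2·m_{j+1}(I_a) for j ≤ n−1, and m_n(I_{2a}) = a, where m_{j+1}(I_a) refers to the m-vector of I_a viewed in Q_{n+1}. -/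
/-!
Appending a last bit `b` to `y ∈ Q_n` gives a string of value `2 * bval y + b`, so
`I_{2a} ⊆ Q_{n+1}` is `I_a ⊆ Q_n` with a free last bit appended; and when `a ≤ 2 ^ n`,
`I_a ⊆ Q_{n+1}` is `I_a ⊆ Q_n` with a `0` prepended. Counting ones coordinatewise through
these two decompositions gives both identities.
-/

open Finset

lemma bval_snoc {n : ℕ} (x : Fin n → Bool) (b : Bool) :
    bval (Fin.snoc x b : Fin (n + 1) → Bool) = 2 * bval x + b.toNat := by
  rw [bval, Fin.sum_univ_castSucc, bval, mul_sum]
  congr 1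
  · refine sum_congr rfl fun i _ => ?_
    rw [Fin.snoc_castSucc, mul_ite, mul_zero, ← pow_succ', Fin.val_castSucc]
    congr 2
    omega
  · cases b <;> simp

lemma bval_cons {n : ℕ} (b : Bool) (x : Fin n → Bool) :
    bval (Fin.cons b x : Fin (n + 1) → Bool) = b.toNat * 2 ^ n + bval x := by
  rw [bval, Fin.sum_univ_succ, bval]
  congr 1
  · cases b <;> simp
  · refine sum_congr rfl fun i _ => ?_
    simp only [Fin.cons_succ, Fin.val_succ]
    congr 2
    omega

def binEquiv (n : ℕ) : (Fin n → Bool) ≃ Fin (2 ^ n) :=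
  ((Equiv.arrowCongr Fin.revPerm (Equiv.refl Bool)).trans
    (Equiv.piCongrRight fun _ => finTwoEquiv.symm)).trans finFunctionFinEquiv

lemma val_binEquiv {n : ℕ} (x : Fin n → Bool) : (binEquiv n x : ℕ) = bval x := by
  rw [binEquiv, Equiv.trans_apply, finFunctionFinEquiv_apply_val, bval,
    ← Equiv.sum_comp Fin.revPerm]
  refine sum_congr rfl fun i _ => ?_
  have hrev : (Fin.revPerm i : ℕ) = n - 1 - i := by
    simp only [Fin.revPerm_apply, Fin.val_rev]
    omega
  rw [hrev]
  cases hx : x i <;> simp [Equiv.arrowCongr_apply, finTwoEquiv, hx]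

lemma card_initSeg (n a : ℕ) : #(initSeg n a) = min (2 ^ n) a := by
  rw [← Fin.card_filter_val_lt]
  exact card_equiv (binEquiv n) fun x => by simp [initSeg, val_binEquiv]

lemma initSeg_two_mul (n a : ℕ) :
    initSeg (n + 1) (2 * a) =
      (univ ×ˢ initSeg n a).map (Fin.snocEquiv fun _ => Bool).toEmbedding := by
  ext x
  induction x using Fin.snocCases with
  | snoc y b =>
    simp only [initSeg, bval_snoc, mem_map_equiv, Fin.snocEquiv_symm_apply, Fin.init_snoc,
      mem_filter, mem_product, mem_univ, true_and]
    have := Bool.toNat_le b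
    omega

lemma initSeg_succ_of_le {n a : ℕ} (ha : a ≤ 2 ^ n) :
    initSeg (n + 1) a =
      ({false} ×ˢ initSeg n a).map (Fin.consEquiv fun _ => Bool).toEmbedding := by
  ext x
  induction x using Fin.consCases with
  | cons b y =>
    simp only [initSeg, bval_cons, mem_map_equiv, Fin.consEquiv_symm_apply, Fin.cons_zero,
      Fin.tail_cons, mem_filter, mem_product, mem_univ, mem_singleton, true_and]
    cases b
    · simp
    · simp only [Bool.toNat_true, one_mul, Bool.true_eq_false, false_and, iff_false, not_lt]
      omega

lemma mCount_map {α : Type*} {n : ℕ} (s : Finset α) (e : α ↪ (Fin n → Bool)) (j : Fin n) :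
    mCount (s.map e) j = #{p ∈ s | e p j = true} := by
  rw [mCount, filter_map, card_map]
  rfl

lemma mCount_initSeg_two_mul_castSucc (n a : ℕ) (j : Fin n) :
    mCount (initSeg (n + 1) (2 * a)) j.castSucc = 2 * mCount (initSeg n a) j := by
  rw [initSeg_two_mul, mCount_map]
  simp only [Equiv.coe_toEmbedding, Fin.snocEquiv_apply, Fin.snoc_castSucc]
  rw [filter_product_right fun y : Fin n → Bool => y j = true, card_product, card_univ,
    Fintype.card_bool, mCount]

lemma mCount_initSeg_two_mul_last (n a : ℕ) :
    mCount (initSeg (n + 1) (2 * a)) (Fin.last n) = min (2 ^ n) a := by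
  rw [initSeg_two_mul, mCount_map]
  simp only [Equiv.coe_toEmbedding, Fin.snocEquiv_apply, Fin.snoc_last]
  rw [filter_product_left (· = true), card_product, card_initSeg]
  simp [filter_eq']

lemma mCount_initSeg_succ_of_le {n a : ℕ} (ha : a ≤ 2 ^ n) (j : Fin n) :
    mCount (initSeg (n + 1) a) j.succ = mCount (initSeg n a) j := by
  rw [initSeg_succ_of_le ha, mCount_map]
  simp only [Equiv.coe_toEmbedding, Fin.consEquiv_apply, Fin.cons_succ]
  rw [filter_product_right fun y : Fin n → Bool => y j = true, card_product, card_singleton,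
    one_mul, mCount]

theorem stmt_12 (n a : ℕ) (ha : a ≤ 2 ^ n) :
    (∀ j : Fin (n + 1), (hj : j.val < n) →
      mCount (initSeg (n + 1) (2 * a)) j =
        2 * mCount (initSeg (n + 1) a) ⟨j.val + 1, by omega⟩) ∧
    mCount (initSeg (n + 1) (2 * a)) ⟨n, by omega⟩ = a := by
  refine ⟨fun j hj => ?_, ?_⟩
  · obtain ⟨j, rfl⟩ : ∃ i : Fin n, i.castSucc = j := ⟨⟨j, hj⟩, rfl⟩
    rw [mCount_initSeg_two_mul_castSucc, ← mCount_initSeg_succ_of_le ha]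
    rfl
  · rw [show (⟨n, _⟩ : Fin (n + 1)) = Fin.last n from rfl, mCount_initSeg_two_mul_last,
      min_eq_right ha]
end

section
/- Let S ⊆ Q_n and g ∈ Aut(Q_n). If m_j(g(S)) = 0 for all j < k (i.e., the first k entries of the m-vector of g(S) are zero), then g(S) ⊆ F where F = {x : x_0 = ... = x_{k−1} = 0}, and there exists g' ∈ Aut(Q_n) fixing the first k coordinates pointwise (acting as an automorphism of Q_{n−k} on the remaining coordinates) with g'(S') = g(S) whenever S ⊆ F; in particular, if I_a ⊆ Q_n has a ≤ 2^{n−k} and the first k entries of m(g(I_a)) are zero, there is g' ∈ Aut(Q_n) with g'(I_a) = g(I_a) and g' restricting to an automorphism of the subcube F ≅ Q_{n−k}. -/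
/-!
An automorphism `g` of `Q_n` maps the edge `{x, x + e_i}` to an edge `{g x, g x + e_π(i)}`.
Because two distinct neighbours of a vertex have exactly two common neighbours, the
direction map `π` does not change along edges, hence is a single permutation, and
`g x = g 0 ⊕ x ∘ τ`. For `a ≤ 2^(n-k)` every element of `I_a` vanishes on `K = {0, …, k-1}`;
since `0 ∈ I_a` and `g(I_a)` vanishes on `K`, so does `g 0`, and then every element of `I_a`
also vanishes on `τ(K)`. Composing `τ` with a permutation supported on `K ∪ τ(K)` that sends
`τ(K)` back onto `K` therefore does not change `g` on `I_a`, and produces an automorphism fixing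
the first `k` coordinates.
-/

open Finset

namespace Equiv.Perm

variable {α : Type*} [Fintype α] [DecidableEq α]

theorem exists_leftInvOn_support_subset (τ : Perm α) (K : Finset α) :
    ∃ σ : Perm α, σ.support ⊆ K ∪ K.image τ ∧ Set.LeftInvOn σ τ K := by
  set Z := K ∪ K.image τ
  obtain ⟨e, he⟩ := Set.MapsTo.exists_equiv_extend_of_card_eq (Fintype.card_coe Z)
    (s := {z : Z | (z : α) ∈ K.image τ}) (f := fun z => τ.symm z)
    (fun z hz => by
      obtain ⟨j, hj, hjz⟩ := Finset.mem_image.1 hz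
      simp [Z, ← hjz, hj])
    (fun z _ w _ h => Subtype.ext (τ.symm.injective h))
  refine ⟨ofSubtype e, ?_, fun j hj => ?_⟩
  · rw [support_ofSubtype]
    intro i hi
    obtain ⟨z, -, rfl⟩ := Finset.mem_map.1 hi
    exact z.2
  · have hτj : τ j ∈ Z := Finset.mem_union_right _ (Finset.mem_image_of_mem _ hj)
    rw [ofSubtype_apply_of_mem e hτj, he _ (Finset.mem_image_of_mem _ hj), symm_apply_apply]

theorem apply_apply_eq_of_forall_mem_support {β : Type*} {σ : Perm α} {x : α → β} {b : β}
    (hx : ∀ i ∈ σ.support, x i = b) (i : α) : x (σ i) = x i := by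
  by_cases hi : i ∈ σ.support
  · rw [hx _ (apply_mem_support.2 hi), hx _ hi]
  · rw [notMem_support.1 hi]

end Equiv.Perm

namespace Hypercube

variable {n : ℕ}

def flipBit (x : Fin n → Bool) (i : Fin n) : Fin n → Bool := Function.update x i (!x i)

theorem flipBit_apply (x : Fin n → Bool) (i j : Fin n) :
    flipBit x i j = (x j ^^ decide (j = i)) := by
  by_cases h : j = i
  · subst h; simp [flipBit]
  · simp [flipBit, h]

@[simp]
theorem flipBit_flipBit (x : Fin n → Bool) (i : Fin n) : flipBit (flipBit x i) i = x := by
  funext j; simp [flipBit_apply]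

theorem flipBit_comm (x : Fin n → Bool) (i j : Fin n) :
    flipBit (flipBit x i) j = flipBit (flipBit x j) i := by
  funext m; simp only [flipBit_apply, Bool.xor_assoc, Bool.xor_comm (decide (m = i))]

theorem flipBit_left_injective (x : Fin n → Bool) : Function.Injective (flipBit x) := by
  intro i j h
  by_contra hij
  simpa [flipBit_apply, hij] using congrFun h i

theorem eq_flipBit_iff {x y : Fin n → Bool} {i : Fin n} :
    y = flipBit x i ↔ univ.filter (fun j => x j ≠ y j) = {i} := by
  simp only [funext_iff, Finset.ext_iff, mem_filter, mem_univ, true_and, mem_singleton,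
    flipBit_apply]
  refine forall_congr' fun j => ?_
  by_cases h : j = i <;> cases x j <;> cases y j <;> simp [h]

theorem adj_iff_exists_flipBit {x y : Fin n → Bool} :
    (hypercube n).Adj x y ↔ ∃ i, y = flipBit x i := by
  simp only [eq_flipBit_iff]
  exact Finset.card_eq_one

theorem adj_flipBit (x : Fin n → Bool) (i : Fin n) : (hypercube n).Adj x (flipBit x i) :=
  adj_iff_exists_flipBit.2 ⟨i, rfl⟩

theorem eq_or_eq_of_adj_flipBit {u z : Fin n → Bool} {a b : Fin n} (hab : a ≠ b)
    (ha : (hypercube n).Adj (flipBit u a) z) (hb : (hypercube n).Adj (flipBit u b) z) :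
    z = u ∨ z = flipBit (flipBit u a) b := by
  obtain ⟨p, rfl⟩ := adj_iff_exists_flipBit.1 ha
  obtain ⟨q, hq⟩ := adj_iff_exists_flipBit.1 hb
  by_cases hpa : p = a
  · simp [hpa]
  · have hqa : q = a := by
      have := congrFun hq a
      grind [flipBit_apply]
    have hpb : p = b := by
      have := congrFun hq b
      grind [flipBit_apply]
    simp [hpb]

theorem flipBit_induction {P : (Fin n → Bool) → Prop} (zero : P fun _ => false)
    (flip : ∀ x i, P x → P (flipBit x i)) (x : Fin n → Bool) : P x := by
  suffices ∀ s : Finset (Fin n), P fun j => decide (j ∈ s) by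
    simpa using this (univ.filter fun j => x j)
  intro s
  induction s using Finset.induction with
  | empty => simpa using zero
  | insert i s hi ih =>
    convert flip _ i ih using 1
    funext j
    by_cases h : j = i <;> simp [flipBit_apply, h, hi]

section Automorphism

variable (g : hypercube n ≃g hypercube n)

noncomputable def coordMap (x : Fin n → Bool) (i : Fin n) : Fin n :=
  (adj_iff_exists_flipBit.1 (g.map_adj_iff.2 (adj_flipBit x i))).choose

theorem apply_flipBit_eq_flipBit_coordMap (x : Fin n → Bool) (i : Fin n) :
    g (flipBit x i) = flipBit (g x) (coordMap g x i) :=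
  (adj_iff_exists_flipBit.1 (g.map_adj_iff.2 (adj_flipBit x i))).choose_spec

theorem coordMap_injective (x : Fin n → Bool) : Function.Injective (coordMap g x) := by
  intro i j h
  apply flipBit_left_injective x
  apply g.injective
  rw [apply_flipBit_eq_flipBit_coordMap, apply_flipBit_eq_flipBit_coordMap, h]

theorem coordMap_flipBit (x : Fin n → Bool) (i : Fin n) :
    coordMap g (flipBit x i) = coordMap g x := by
  funext j
  apply flipBit_left_injective (g (flipBit x i))
  rw [← apply_flipBit_eq_flipBit_coordMap]
  by_cases hij : j = i
  · subst hij
    rw [flipBit_flipBit, apply_flipBit_eq_flipBit_coordMap, flipBit_flipBit]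
  · have hne : coordMap g x i ≠ coordMap g x j := (coordMap_injective g x).ne (Ne.symm hij)
    -- `g (x + e_i + e_j)` is a common neighbour of `g x + e_π(i)` and `g x + e_π(j)`
    have hi : (hypercube n).Adj (flipBit (g x) (coordMap g x i))
        (g (flipBit (flipBit x i) j)) := by
      rw [← apply_flipBit_eq_flipBit_coordMap, g.map_adj_iff]
      exact adj_flipBit _ _
    have hj : (hypercube n).Adj (flipBit (g x) (coordMap g x j))
        (g (flipBit (flipBit x i) j)) := by
      rw [← apply_flipBit_eq_flipBit_coordMap, g.map_adj_iff, flipBit_comm]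
      exact adj_flipBit _ _
    rcases eq_or_eq_of_adj_flipBit hne hi hj with h | h
    · have := congrArg (flipBit · j) (g.injective h)
      simp only [flipBit_flipBit] at this
      exact absurd (flipBit_left_injective x this).symm hij
    · rw [h, apply_flipBit_eq_flipBit_coordMap]

theorem coordMap_eq_coordMap_zero (x : Fin n → Bool) : coordMap g x = coordMap g fun _ => false :=
  flipBit_induction (P := fun y => coordMap g y = coordMap g fun _ => false) rfl
    (fun y i hy => (coordMap_flipBit g y i).trans hy) x

noncomputable def coordPerm : Equiv.Perm (Fin n) :=
  Equiv.ofBijective _ (Finite.injective_iff_bijective.1 (coordMap_injective g fun _ => false))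

theorem apply_flipBit (x : Fin n → Bool) (i : Fin n) :
    g (flipBit x i) = flipBit (g x) (coordPerm g i) := by
  rw [apply_flipBit_eq_flipBit_coordMap, coordMap_eq_coordMap_zero]
  rfl

theorem apply_eq_xor (x : Fin n → Bool) (j : Fin n) :
    g x j = (g (fun _ => false) j ^^ x ((coordPerm g).symm j)) := by
  induction x using flipBit_induction generalizing j with
  | zero => simp
  | flip x i ih =>
    simp only [apply_flipBit, flipBit_apply, ih, Bool.xor_assoc, Equiv.symm_apply_eq]

end Automorphism

def affineIso (c : Fin n → Bool) (τ : Equiv.Perm (Fin n)) : hypercube n ≃g hypercube n where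
  toFun x j := c j ^^ x (τ j)
  invFun y i := c (τ.symm i) ^^ y (τ.symm i)
  left_inv x := by funext i; simp
  right_inv y := by funext j; simp
  map_rel_iff' {x y} := by
    change #(univ.filter _) = 1 ↔ #(univ.filter _) = 1
    rw [Finset.card_equiv τ (t := univ.filter fun i => x i ≠ y i) (by simp)]

theorem affineIso_apply (c : Fin n → Bool) (τ : Equiv.Perm (Fin n)) (x : Fin n → Bool)
    (j : Fin n) : affineIso c τ x j = (c j ^^ x (τ j)) :=
  rfl

theorem exists_iso_image_eq_of_forall_eq_false (g : hypercube n ≃g hypercube n)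
    {S : Finset (Fin n → Bool)} {K : Finset (Fin n)} (hS0 : (fun _ => false) ∈ S)
    (hS : ∀ x ∈ S, ∀ j ∈ K, x j = false) (hgS : ∀ x ∈ S, ∀ j ∈ K, g x j = false) :
    ∃ g' : hypercube n ≃g hypercube n, S.image g' = S.image g ∧ ∀ x, ∀ j ∈ K, g' x j = x j := by
  set τ := (coordPerm g).symm
  have hc : ∀ j ∈ K, g (fun _ => false) j = false := hgS _ hS0
  have hSτ : ∀ x ∈ S, ∀ j ∈ K, x (τ j) = false := fun x hx j hj => by
    simpa [apply_eq_xor, hc j hj] using hgS x hx j hj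
  obtain ⟨σ, hσ, hστ⟩ := Equiv.Perm.exists_leftInvOn_support_subset τ K
  have hσS : ∀ x ∈ S, ∀ i, x (σ i) = x i := fun x hx =>
    Equiv.Perm.apply_apply_eq_of_forall_mem_support fun i hi => by
      rcases Finset.mem_union.1 (hσ hi) with hi | hi
      · exact hS x hx i hi
      · obtain ⟨j, hj, rfl⟩ := Finset.mem_image.1 hi
        exact hSτ x hx j hj
  refine ⟨affineIso (g fun _ => false) (σ * τ), Finset.image_congr fun x hx => ?_, ?_⟩
  · funext j
    rw [affineIso_apply, apply_eq_xor g x j, Equiv.Perm.mul_apply, hσS x hx]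
  · intro x j hj
    rw [affineIso_apply, Equiv.Perm.mul_apply, hστ hj, hc j hj, Bool.false_xor]

end Hypercube

theorem mCount_eq_zero_iff {n : ℕ} {S : Finset (Fin n → Bool)} {j : Fin n} :
    mCount S j = 0 ↔ ∀ x ∈ S, x j = false := by
  simp [mCount, Finset.filter_eq_empty_iff]

theorem two_pow_le_bval {n : ℕ} {x : Fin n → Bool} {i : Fin n} (hi : x i = true) :
    2 ^ (n - 1 - i.val) ≤ bval x := by
  have := Finset.single_le_sum (f := fun i : Fin n => if x i then 2 ^ (n - 1 - i.val) else 0)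
    (fun _ _ => Nat.zero_le _) (Finset.mem_univ i)
  simpa [bval, hi] using this

theorem apply_eq_false_of_mem_initSeg {n k a : ℕ} (ha : a ≤ 2 ^ (n - k)) {x : Fin n → Bool}
    (hx : x ∈ initSeg n a) {j : Fin n} (hj : j.val < k) : x j = false := by
  by_contra hxj
  have h1 := two_pow_le_bval (Bool.eq_true_of_not_eq_false hxj)
  have h2 : 2 ^ (n - k) ≤ 2 ^ (n - 1 - j.val) := Nat.pow_le_pow_right two_pos (by omega)
  have h3 := (Finset.mem_filter.1 hx).2
  omega

theorem stmt_15_general (n k a : ℕ) (ha : a ≤ 2 ^ (n - k))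
    (g : hypercube n ≃g hypercube n)
    (h0 : ∀ j : Fin n, j.val < k → mCount ((initSeg n a).image g) j = 0) :
    (∀ x ∈ (initSeg n a).image g, ∀ j : Fin n, j.val < k → x j = false) ∧
    ∃ g' : hypercube n ≃g hypercube n,
      (initSeg n a).image g' = (initSeg n a).image g ∧
      ∀ x : Fin n → Bool, ∀ j : Fin n, j.val < k → g' x j = x j := by
  have hgS : ∀ x ∈ (initSeg n a).image g, ∀ j : Fin n, j.val < k → x j = false :=
    fun x hx j hj => mCount_eq_zero_iff.1 (h0 j hj) x hx
  refine ⟨hgS, ?_⟩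
  rcases Nat.eq_zero_or_pos a with rfl | hapos
  · exact ⟨.refl, by simp [initSeg], fun _ _ _ => rfl⟩
  have hS0 : (fun _ => false) ∈ initSeg n a := by
    rw [initSeg, Finset.mem_filter]
    simpa [bval] using hapos
  obtain ⟨g', hg'S, hg'K⟩ := Hypercube.exists_iso_image_eq_of_forall_eq_false g
    (K := univ.filter fun j : Fin n => j.val < k) hS0
    (fun x hx j hj => apply_eq_false_of_mem_initSeg ha hx (Finset.mem_filter.1 hj).2)
    (fun x hx j hj => hgS _ (Finset.mem_image_of_mem g hx) j (Finset.mem_filter.1 hj).2)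
  exact ⟨g', hg'S, fun x j hj => hg'K x j (by simpa using hj)⟩

theorem stmt_15 (n k a : ℕ) (hk : k ≤ n) (ha : a ≤ 2 ^ (n - k))
    (g : hypercube n ≃g hypercube n)
    (h0 : ∀ j : Fin n, j.val < k → mCount ((initSeg n a).image g) j = 0) :
    (∀ x ∈ (initSeg n a).image g, ∀ j : Fin n, j.val < k → x j = false) ∧
    ∃ g' : hypercube n ≃g hypercube n,
      (initSeg n a).image g' = (initSeg n a).image g ∧
      ∀ x : Fin n → Bool, ∀ j : Fin n, j.val < k → g' x j = x j :=
  stmt_15_general n k a ha g h0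
end
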